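/- arXiv:1008.4754 — 2 statements merged into one kernel-verified Lean document; each statement's English description precedes it below -/
import Mathlib

section
/- Let A = (a_{ij}) be a real n×n matrix with nonnegative entries. Then A has a real eigenvalue r ≥ 0 such that every eigenvalue λ of A satisfies |λ| ≤ r, and r satisfies min_i Σ_j a_{ij} ≤ r ≤ max_i Σ_j a_{ij}. -/
/-!
For `A ≥ 0` consider the Collatz–Wielandt set of all `t` with `t • y ≤ A *ᵥ y` for some nonzero
`y ≥ 0`. Testing at the largest coordinate of `y` bounds it by the maximal row sum; it contains
the minimal row sum (take `y = 1`) and, by the triangle inequality applied to `A v = μ v`, the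
modulus of every complex eigenvalue. Compactness of the simplex gives it a greatest element `r`.
For a positive matrix a maximiser `x` is an eigenvector: otherwise `A x - r x ≥ 0` is nonzero, so
`A (A x) - r (A x) = A (A x - r x)` is strictly positive and `r` could be increased. A nonnegative
matrix is the limit of the positive matrices `A + (k + 1)⁻¹ J`, and a convergent subsequence of
their normalised eigenpairs gives an eigenpair of `A` whose eigenvalue is still greatest.
-/

open Filter Topology

namespace Matrix

variable {ι : Type*} [Fintype ι]

theorem mem_spectrum_iff_exists_mulVec_eq_smul {K : Type*} [Field K] [DecidableEq ι]
    {A : Matrix ι ι K} {μ : K} : μ ∈ spectrum K A ↔ ∃ v, v ≠ 0 ∧ A *ᵥ v = μ • v := by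
  rw [← spectrum_toLin', ← Module.End.hasEigenvalue_iff_mem_spectrum,
    Module.End.hasEigenvalue_iff, Submodule.ne_bot_iff]
  simp only [Module.End.mem_eigenspace_iff, toLin'_apply, and_comm]

theorem mulVec_nonneg {A : Matrix ι ι ℝ} (hA : ∀ i j, 0 ≤ A i j) {y : ι → ℝ} (hy : 0 ≤ y) :
    0 ≤ A *ᵥ y :=
  fun i => Finset.sum_nonneg fun j _ => mul_nonneg (hA i j) (hy j)

theorem mulVec_pos {A : Matrix ι ι ℝ} (hA : ∀ i j, 0 < A i j) {y : ι → ℝ} (hy : 0 ≤ y)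
    (hy₀ : y ≠ 0) (i : ι) : 0 < (A *ᵥ y) i := by
  obtain ⟨j, hj⟩ := Function.ne_iff.1 hy₀
  exact Finset.sum_pos' (fun k _ => mul_nonneg (hA i k).le (hy k))
    ⟨j, Finset.mem_univ j, mul_pos (hA i j) ((hy j).lt_of_ne' hj)⟩

theorem mulVec_mono_left {A B : Matrix ι ι ℝ} (hAB : ∀ i j, A i j ≤ B i j) {y : ι → ℝ}
    (hy : 0 ≤ y) : A *ᵥ y ≤ B *ᵥ y :=
  fun i => Finset.sum_le_sum fun j _ => mul_le_mul_of_nonneg_right (hAB i j) (hy j)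

def collatzWielandtSet (A : Matrix ι ι ℝ) : Set ℝ :=
  {t | ∃ y, 0 ≤ y ∧ y ≠ 0 ∧ t • y ≤ A *ᵥ y}

theorem collatzWielandtSet_mono {A B : Matrix ι ι ℝ} (hAB : ∀ i j, A i j ≤ B i j) :
    collatzWielandtSet A ⊆ collatzWielandtSet B := fun _ ⟨y, hy, hy₀, hty⟩ =>
  ⟨y, hy, hy₀, hty.trans (mulVec_mono_left hAB hy)⟩

theorem iInf_sum_mem_collatzWielandtSet [Nonempty ι] (A : Matrix ι ι ℝ) :
    (⨅ i, ∑ j, A i j) ∈ collatzWielandtSet A := by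
  refine ⟨1, zero_le_one, one_ne_zero, fun i => ?_⟩
  simpa [mulVec, dotProduct] using ciInf_le (Set.finite_range _).bddBelow i

theorem le_iSup_sum_of_mem_collatzWielandtSet {A : Matrix ι ι ℝ} (hA : ∀ i j, 0 ≤ A i j)
    {t : ℝ} (ht : t ∈ collatzWielandtSet A) : t ≤ ⨆ i, ∑ j, A i j := by
  obtain ⟨y, hy, hy₀, hty⟩ := ht
  obtain ⟨j, hj⟩ := Function.ne_iff.1 hy₀
  have : Nonempty ι := ⟨j⟩
  obtain ⟨i, hi⟩ := Finite.exists_max y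
  have hyi : 0 < y i := ((hy j).lt_of_ne' hj).trans_le (hi j)
  have : t * y i ≤ (∑ j, A i j) * y i :=
    calc t * y i ≤ ∑ j, A i j * y j := hty i
      _ ≤ ∑ j, A i j * y i := Finset.sum_le_sum fun j _ => mul_le_mul_of_nonneg_left (hi j) (hA i j)
      _ = (∑ j, A i j) * y i := (Finset.sum_mul ..).symm
  exact (le_of_mul_le_mul_right this hyi).trans
    (le_ciSup (Set.finite_range fun i => ∑ j, A i j).bddAbove i)

theorem norm_mem_collatzWielandtSet {A : Matrix ι ι ℝ} (hA : ∀ i j, 0 ≤ A i j) {μ : ℂ}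
    {v : ι → ℂ} (hv : v ≠ 0) (hμ : A.map (fun a => (a : ℂ)) *ᵥ v = μ • v) :
    ‖μ‖ ∈ collatzWielandtSet A := by
  refine ⟨fun i => ‖v i‖, fun i => norm_nonneg _, fun h => hv (funext fun i => ?_), fun i => ?_⟩
  · simpa using congrFun h i
  calc ‖μ‖ * ‖v i‖ = ‖∑ j, (A i j : ℂ) * v j‖ := by
        rw [← norm_mul, ← smul_eq_mul, ← Pi.smul_apply, ← hμ]; rfl
    _ ≤ ∑ j, ‖(A i j : ℂ) * v j‖ := norm_sum_le _ _
    _ = ∑ j, A i j * ‖v j‖ := by simp only [norm_mul, Complex.norm_of_nonneg (hA i _)]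

theorem exists_mem_stdSimplex_of_mem_collatzWielandtSet {A : Matrix ι ι ℝ} {t : ℝ}
    (ht : t ∈ collatzWielandtSet A) : ∃ y ∈ stdSimplex ℝ ι, t • y ≤ A *ᵥ y := by
  obtain ⟨y, hy, hy₀, hty⟩ := ht
  have hsum : 0 < ∑ i, y i := by
    obtain ⟨j, hj⟩ := Function.ne_iff.1 hy₀
    exact Finset.sum_pos' (fun i _ => hy i) ⟨j, Finset.mem_univ j, (hy j).lt_of_ne' hj⟩
  refine ⟨(∑ i, y i)⁻¹ • y, ⟨fun i => ?_, ?_⟩, ?_⟩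
  · exact mul_nonneg (inv_nonneg.2 hsum.le) (hy i)
  · simp [← Finset.mul_sum, hsum.ne']
  · rw [mulVec_smul, smul_comm]
    exact smul_le_smul_of_nonneg_left hty (inv_nonneg.2 hsum.le)

theorem mem_collatzWielandtSet_of_mulVec_eq_smul {A : Matrix ι ι ℝ} {r : ℝ} {x : ι → ℝ}
    (hx : x ∈ stdSimplex ℝ ι) (hAx : A *ᵥ x = r • x) : r ∈ collatzWielandtSet A :=
  ⟨x, hx.1, fun h => by simpa [h] using hx.2, hAx.ge⟩

theorem exists_isGreatest_collatzWielandtSet [Nonempty ι] {A : Matrix ι ι ℝ}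
    (hA : ∀ i j, 0 ≤ A i j) : ∃ r, ∃ x ∈ stdSimplex ℝ ι, r • x ≤ A *ᵥ x ∧
      r ∈ upperBounds (collatzWielandtSet A) := by
  set M := ⨆ i, ∑ j, A i j
  let K := (Set.Icc 0 M ×ˢ stdSimplex ℝ ι) ∩ {p : ℝ × (ι → ℝ) | p.1 • p.2 ≤ A *ᵥ p.2}
  have hK : IsCompact K := (isCompact_Icc.prod (isCompact_stdSimplex ℝ ι)).inter_right
    (isClosed_le (continuous_fst.smul continuous_snd)
      (continuous_const.matrix_mulVec continuous_snd))
  have hK₀ : K.Nonempty := by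
    classical
    obtain ⟨i⟩ := ‹Nonempty ι›
    refine ⟨(0, Pi.single i 1), ⟨⟨le_rfl, ?_⟩, single_mem_stdSimplex ℝ i⟩, ?_⟩
    · exact (Finset.sum_nonneg fun j _ => hA i j).trans
        (le_ciSup (Set.finite_range fun i => ∑ j, A i j).bddAbove i)
    · simpa using mulVec_nonneg hA (Pi.single_nonneg.2 zero_le_one)
  obtain ⟨⟨r, x⟩, ⟨⟨⟨hr, -⟩, hx⟩, hrx⟩, hmax⟩ := hK.exists_isMaxOn hK₀ continuous_fst.continuousOn
  refine ⟨r, x, hx, hrx, fun t ht => ?_⟩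
  rcases le_or_gt t 0 with ht₀ | ht₀
  · exact ht₀.trans hr
  obtain ⟨y, hy, hty⟩ := exists_mem_stdSimplex_of_mem_collatzWielandtSet ht
  exact hmax (show (t, y) ∈ K from
    ⟨⟨⟨ht₀.le, le_iSup_sum_of_mem_collatzWielandtSet hA ht⟩, hy⟩, hty⟩)

theorem mulVec_eq_smul_of_mem_upperBounds_collatzWielandtSet {A : Matrix ι ι ℝ}
    (hA : ∀ i j, 0 < A i j) {r : ℝ} {x : ι → ℝ} (hx : 0 ≤ x) (hx₀ : x ≠ 0)
    (hrx : r • x ≤ A *ᵥ x) (hr : r ∈ upperBounds (collatzWielandtSet A)) :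
    A *ᵥ x = r • x := by
  by_contra hne
  set w := A *ᵥ x
  have hw : 0 ≤ w := mulVec_nonneg (fun i j => (hA i j).le) hx
  have hw₀ : w ≠ 0 := by
    obtain ⟨i, -⟩ := Function.ne_iff.1 hx₀
    exact fun h => (mulVec_pos hA hx hx₀ i).ne' (congrFun h i)
  have hgap (i : ι) : r * w i < (A *ᵥ w) i := by
    have := mulVec_pos hA (sub_nonneg.2 hrx) (sub_ne_zero.2 hne) i
    simpa [mulVec_sub, mulVec_smul] using this
  have hnear : ∀ᶠ t in 𝓝 r, ∀ i, t * w i < (A *ᵥ w) i := eventually_all.2 fun i =>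
    (continuous_id.mul continuous_const).continuousAt.eventually (gt_mem_nhds (hgap i))
  obtain ⟨t, ht, hrt⟩ :=
    ((hnear.filter_mono nhdsWithin_le_nhds).and (self_mem_nhdsWithin (s := Set.Ioi r))).exists
  exact (hr ⟨w, hw, hw₀, fun i => (ht i).le⟩).not_gt hrt

theorem exists_eigenvector_isGreatest_collatzWielandtSet_of_pos [Nonempty ι]
    {A : Matrix ι ι ℝ} (hA : ∀ i j, 0 < A i j) : ∃ r, ∃ x ∈ stdSimplex ℝ ι,
      A *ᵥ x = r • x ∧ IsGreatest (collatzWielandtSet A) r := by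
  obtain ⟨r, x, hx, hrx, hr⟩ := exists_isGreatest_collatzWielandtSet fun i j => (hA i j).le
  have hAx := mulVec_eq_smul_of_mem_upperBounds_collatzWielandtSet hA hx.1
    (fun h => by simpa [h] using hx.2) hrx hr
  exact ⟨r, x, hx, hAx, mem_collatzWielandtSet_of_mulVec_eq_smul hx hAx, hr⟩

theorem exists_eigenvector_isGreatest_collatzWielandtSet [Nonempty ι] {A : Matrix ι ι ℝ}
    (hA : ∀ i j, 0 ≤ A i j) : ∃ r, ∃ x ∈ stdSimplex ℝ ι,
      A *ᵥ x = r • x ∧ IsGreatest (collatzWielandtSet A) r := by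
  set B : ℕ → Matrix ι ι ℝ := fun k => A + (1 / ((k : ℝ) + 1)) • of fun _ _ => 1
  have hB_pos (k : ℕ) (i j : ι) : 0 < B k i j := by
    simpa [B] using add_pos_of_nonneg_of_pos (hA i j) (inv_pos.2 (Nat.cast_add_one_pos k))
  have hA_le (k : ℕ) (i j : ι) : A i j ≤ B k i j := by simp [B]; positivity
  have hB_le (k : ℕ) (i j : ι) : B k i j ≤ B 0 i j := by
    simpa [B] using inv_le_one_of_one_le₀ (by simp : (1 : ℝ) ≤ k + 1)
  have hB_lim : Tendsto B atTop (𝓝 (A + (0 : ℝ) • of fun _ _ => 1)) :=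
    tendsto_const_nhds.add (tendsto_one_div_add_atTop_nhds_zero_nat.smul_const _)
  rw [zero_smul, add_zero] at hB_lim
  choose r x hx hBx hr using fun k =>
    exists_eigenvector_isGreatest_collatzWielandtSet_of_pos (hB_pos k)
  have hbound (k : ℕ) : (r k, x k) ∈
      Set.Icc (⨅ i, ∑ j, A i j) (⨆ i, ∑ j, B 0 i j) ×ˢ stdSimplex ℝ ι :=
    ⟨⟨(hr k).2 (collatzWielandtSet_mono (hA_le k) (iInf_sum_mem_collatzWielandtSet A)),
      le_iSup_sum_of_mem_collatzWielandtSet (fun i j => (hB_pos 0 i j).le)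
        (collatzWielandtSet_mono (hB_le k) (hr k).1)⟩, hx k⟩
  obtain ⟨⟨r₀, x₀⟩, ⟨-, hx₀⟩, φ, hφ, hlim⟩ :=
    (isCompact_Icc.prod (isCompact_stdSimplex ℝ ι)).tendsto_subseq hbound
  have hr_lim : Tendsto (r ∘ φ) atTop (𝓝 r₀) := (continuous_fst.tendsto _).comp hlim
  have hx_lim : Tendsto (x ∘ φ) atTop (𝓝 x₀) := (continuous_snd.tendsto _).comp hlim
  have hAx : A *ᵥ x₀ = r₀ • x₀ := by
    refine tendsto_nhds_unique ?_ (hr_lim.smul hx_lim)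
    have := ((continuous_fst.matrix_mulVec continuous_snd).tendsto (A, x₀)).comp
      ((hB_lim.comp hφ.tendsto_atTop).prodMk_nhds hx_lim)
    simpa [Function.comp_def, hBx] using this
  exact ⟨r₀, x₀, hx₀, hAx, mem_collatzWielandtSet_of_mulVec_eq_smul hx₀ hAx, fun t ht =>
    ge_of_tendsto' hr_lim fun k => (hr (φ k)).2 (collatzWielandtSet_mono (hA_le _) ht)⟩

end Matrix

open Matrix

/-- Perron–Frobenius theorem: a nonnegative real `n×n` matrix has a nonnegative real
eigenvalue `r` dominating all (complex) eigenvalues in modulus, and `r` lies between the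
minimum and maximum row sums. -/
theorem perron_frobenius {n : ℕ} (hn : 0 < n) (A : Matrix (Fin n) (Fin n) ℝ)
    (hA : ∀ i j, 0 ≤ A i j) :
    ∃ r : ℝ, 0 ≤ r ∧
      (r : ℂ) ∈ spectrum ℂ (A.map (fun a => (a : ℂ))) ∧
      (∀ μ ∈ spectrum ℂ (A.map (fun a => (a : ℂ))), ‖μ‖ ≤ r) ∧
      (⨅ i, ∑ j, A i j) ≤ r ∧ r ≤ ⨆ i, ∑ j, A i j := by
  have : Nonempty (Fin n) := Fin.pos_iff_nonempty.1 hn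
  obtain ⟨r, x, hx, hAx, hr_mem, hr_max⟩ := exists_eigenvector_isGreatest_collatzWielandtSet hA
  have hmin := hr_max (iInf_sum_mem_collatzWielandtSet A)
  refine ⟨r, (le_ciInf fun i => Finset.sum_nonneg fun j _ => hA i j).trans hmin, ?_, ?_, hmin,
    le_iSup_sum_of_mem_collatzWielandtSet hA hr_mem⟩
  · refine mem_spectrum_iff_exists_mulVec_eq_smul.2 ⟨fun i => x i, fun h => ?_, ?_⟩
    · simpa [show x = 0 from funext fun i => by simpa using congrFun h i] using hx.2
    · ext i
      simpa [mulVec, dotProduct] using congrArg (fun v => (v i : ℂ)) hAx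
  · intro μ hμ
    obtain ⟨v, hv, hμv⟩ := mem_spectrum_iff_exists_mulVec_eq_smul.1 hμ
    exact hr_max (norm_mem_collatzWielandtSet hA hv hμv)
end

section
/- Let a, b > 0 and M > 0, and consider the ODE system x₁' = −a·α(t)·x₁ + b·x₂, x₂' = a·α(t)·x₁ − b·x₂, where α : [0,∞) → [0,1] is measurable, with initial condition x₁(0) + x₂(0) = M, x₁(0), x₂(0) ≥ 0. Then there exist c > 0 (independent of M) and T > 0 such that x₁(t) ≥ c·M for all t ≥ T; in fact one may take any c < b/(a+b). -/
/-- Lower bound on `x₁` for the synchronised two-state fluid system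
`x₁' = -a α(t) x₁ + b x₂`, `x₂' = a α(t) x₁ - b x₂` with `α(t) ∈ [0,1]`:
for any `c` with `0 < c < b/(a+b)` there is a time `T > 0` after which `x₁(t) ≥ c M`,
where `M = x₁(0) + x₂(0)` is the total population. -/
theorem fluid_lower_bound (a b M : ℝ) (ha : 0 < a) (hb : 0 < b) (hM : 0 < M)
    (α : ℝ → ℝ) (hα_meas : Measurable α)
    (hα : ∀ t : ℝ, 0 ≤ t → α t ∈ Set.Icc (0 : ℝ) 1)
    (x₁ x₂ : ℝ → ℝ)
    (hx₁0 : 0 ≤ x₁ 0) (hx₂0 : 0 ≤ x₂ 0) (hsum : x₁ 0 + x₂ 0 = M)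
    (hd₁ : ∀ t : ℝ, 0 ≤ t → HasDerivAt x₁ (-(a * α t * x₁ t) + b * x₂ t) t)
    (hd₂ : ∀ t : ℝ, 0 ≤ t → HasDerivAt x₂ (a * α t * x₁ t - b * x₂ t) t) :
    ∀ c : ℝ, 0 < c → c < b / (a + b) →
      ∃ T : ℝ, 0 < T ∧ ∀ t : ℝ, T ≤ t → c * M ≤ x₁ t := by
  intro c hc hcb
  have hab : 0 < a + b := by linarith
  -- Step 1: the total population is conserved.
  have hsum' : ∀ t : ℝ, 0 ≤ t → x₁ t + x₂ t = M := by
    intro t ht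
    rcases eq_or_lt_of_le ht with h | h
    · rw [← h]; exact hsum
    have key := constant_of_has_deriv_right_zero
      (f := fun s => x₁ s + x₂ s) (a := (0:ℝ)) (b := t)
      (fun s hs => ((hd₁ s hs.1).add (hd₂ s hs.1)).continuousAt.continuousWithinAt)
      (fun s hs => by
        have h0 : (-(a * α s * x₁ s) + b * x₂ s) + (a * α s * x₁ s - b * x₂ s) = 0 := by ring
        exact h0 ▸ ((hd₁ s hs.1).add (hd₂ s hs.1)).hasDerivWithinAt)
      t (Set.mem_Icc.2 ⟨ht, le_refl t⟩)
    simpa [hsum] using key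
  -- Step 2: x₁ is nonnegative on [0, ∞).
  have hx₁nn : ∀ t : ℝ, 0 ≤ t → 0 ≤ x₁ t := by
    intro t₁ ht₁
    by_contra hneg
    push_neg at hneg
    set C : Set ℝ := {u | u ∈ Set.Icc (0:ℝ) t₁ ∧ 0 ≤ x₁ u} with hCdef
    have hC0 : (0:ℝ) ∈ C := ⟨⟨le_refl 0, ht₁⟩, hx₁0⟩
    have hCne : C.Nonempty := ⟨0, hC0⟩
    have hCbdd : BddAbove C := ⟨t₁, fun x hx => hx.1.2⟩
    set s := sSup C with hsdef
    have hs0 : 0 ≤ s := le_csSup hCbdd hC0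
    have hst₁ : s ≤ t₁ := csSup_le hCne fun x hx => hx.1.2
    -- x₁ s ≥ 0 by continuity
    have hxs : 0 ≤ x₁ s := by
      have hcl : s ∈ closure C := csSup_mem_closure hCne hCbdd
      have hcont : ContinuousAt x₁ s := (hd₁ s hs0).continuousAt
      have himg : x₁ s ∈ closure (x₁ '' C) :=
        hcont.continuousWithinAt.mem_closure_image hcl
      have hsub : x₁ '' C ⊆ Set.Ici (0:ℝ) := by
        rintro _ ⟨u, hu, rfl⟩; exact hu.2
      have : x₁ s ∈ Set.Ici (0:ℝ) := by
        have := closure_mono hsub himg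
        rwa [closure_Ici] at this
      exact this
    have hst : s < t₁ := hst₁.lt_of_ne (fun h => by rw [h] at hxs; linarith)
    have hnegIoo : ∀ u ∈ Set.Ioo s t₁, x₁ u < 0 := by
      intro u hu
      by_contra h
      push_neg at h
      have hu' : u ∈ C := ⟨⟨le_trans hs0 hu.1.le, hu.2.le⟩, h⟩
      exact absurd (le_csSup hCbdd hu') (not_le.2 hu.1)
    have hmono : StrictMonoOn x₁ (Set.Icc s t₁) := by
      apply strictMonoOn_of_deriv_pos (convex_Icc s t₁)
      · intro u hu
        exact (hd₁ u (le_trans hs0 hu.1)).continuousAt.continuousWithinAt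
      · intro u hu
        rw [interior_Icc] at hu
        have hu0 : 0 ≤ u := le_trans hs0 hu.1.le
        rw [(hd₁ u hu0).deriv]
        have hx2 : x₂ u = M - x₁ u := by linarith [hsum' u hu0]
        have hαu := hα u hu0
        have hx1 : x₁ u < 0 := hnegIoo u hu
        nlinarith [mul_nonneg (mul_nonneg ha.le hαu.1) (neg_nonneg.2 hx1.le)]
    have := hmono (Set.left_mem_Icc.2 hst.le) (Set.right_mem_Icc.2 hst.le) hst
    linarith
  -- Step 3: comparison function ψ is monotone
  set K : ℝ := b * M / (a + b) with hKdef
  have hK : 0 < K := by positivity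
  set ψ : ℝ → ℝ := fun t => Real.exp ((a + b) * t) * (x₁ t - K) with hψdef
  have hψd : ∀ t : ℝ, 0 ≤ t →
      HasDerivAt ψ ((a + b) * Real.exp ((a + b) * t) * (x₁ t - K)
        + Real.exp ((a + b) * t) * (-(a * α t * x₁ t) + b * x₂ t)) t := by
    intro t ht
    have h1 : HasDerivAt (fun u : ℝ => Real.exp ((a + b) * u))
        ((a + b) * Real.exp ((a + b) * t)) t := by
      have := ((hasDerivAt_id t).const_mul (a + b)).exp
      simpa [mul_comm] using this
    exact h1.mul ((hd₁ t ht).sub_const K)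
  have hψnn : ∀ t : ℝ, 0 < t → 0 ≤ deriv ψ t := by
    intro t ht
    rw [(hψd t ht.le).deriv]
    have hx2 : x₂ t = M - x₁ t := by linarith [hsum' t ht.le]
    have hαt := hα t ht.le
    have hx1 : 0 ≤ x₁ t := hx₁nn t ht.le
    have hE : 0 < Real.exp ((a + b) * t) := Real.exp_pos _
    have key : (a + b) * (x₁ t - K) + (-(a * α t * x₁ t) + b * x₂ t)
        = a * (1 - α t) * x₁ t := by
      rw [hx2, hKdef]; field_simp; ring
    have : 0 ≤ a * (1 - α t) * x₁ t := by
      apply mul_nonneg (mul_nonneg ha.le (by linarith [hαt.2])) hx1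
    nlinarith
  have hψmono : MonotoneOn ψ (Set.Ici 0) := by
    apply monotoneOn_of_deriv_nonneg (convex_Ici 0)
    · intro u hu
      exact (hψd u hu).continuousAt.continuousWithinAt
    · intro u hu
      rw [interior_Ici] at hu
      exact ((hψd u (le_of_lt hu)).differentiableAt).differentiableWithinAt
    · intro u hu
      rw [interior_Ici] at hu
      exact hψnn u hu
  -- Step 4: lower bound x₁ t ≥ K - K * exp(-(a+b) t)
  have hlow : ∀ t : ℝ, 0 ≤ t → K - K * Real.exp (-((a + b) * t)) ≤ x₁ t := by
    intro t ht
    have h0 : ψ 0 ≤ ψ t := hψmono (Set.self_mem_Ici) ht ht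
    have hψ0 : -K ≤ ψ 0 := by
      simp only [hψdef, mul_zero, Real.exp_zero, one_mul]
      linarith
    have hE : 0 < Real.exp ((a + b) * t) := Real.exp_pos _
    have : -K ≤ Real.exp ((a + b) * t) * (x₁ t - K) := le_trans hψ0 h0
    have hinv : Real.exp (-((a + b) * t)) = (Real.exp ((a + b) * t))⁻¹ :=
      Real.exp_neg _
    rw [hinv]
    have h2 := mul_le_mul_of_nonneg_right this (inv_pos.2 hE).le
    have h3 : Real.exp ((a + b) * t) * (x₁ t - K) * (Real.exp ((a + b) * t))⁻¹
        = x₁ t - K := by field_simp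
    rw [h3] at h2
    linarith
  -- Step 5: choose T
  have hδ : 0 < b / (a + b) - c := by linarith
  set ε : ℝ := (b / (a + b) - c) * (a + b) / b with hεdef
  have hε : 0 < ε := by positivity
  have htend : Filter.Tendsto (fun t : ℝ => Real.exp (-((a + b) * t)))
      Filter.atTop (nhds 0) := by
    apply Real.tendsto_exp_atBot.comp
    apply Filter.tendsto_neg_atBot_iff.2
    exact Filter.Tendsto.const_mul_atTop hab Filter.tendsto_id
  have hev : ∀ᶠ t in Filter.atTop, Real.exp (-((a + b) * t)) ≤ ε :=
    htend.eventually_le_const hε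
  rcases Filter.eventually_atTop.1 hev with ⟨T₀, hT₀⟩
  refine ⟨max T₀ 1, lt_of_lt_of_le zero_lt_one (le_max_right _ _), ?_⟩
  intro t htT
  have ht0 : (0:ℝ) ≤ t := le_trans (le_trans zero_le_one (le_max_right _ _)) htT
  have hexp : Real.exp (-((a + b) * t)) ≤ ε := hT₀ t (le_trans (le_max_left _ _) htT)
  have hlow' := hlow t ht0
  have hKε : K * Real.exp (-((a + b) * t)) ≤ K * ε :=
    mul_le_mul_of_nonneg_left hexp hK.le
  have hKε' : K * ε = M * (b / (a + b) - c) := by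
    rw [hKdef, hεdef]; field_simp
  have hKM : K = M * (b / (a + b)) := by rw [hKdef]; ring
  nlinarith
end
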